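/- Let Q0, Q1 be probability distributions on a finite alphabet Z with supp(Q0) = Z, and let Q_γ = (1−γ)Q0 + γQ1 for γ ∈ [0,1]. If γ_n → 0, then for all sufficiently large n, (γ_n²/2)·χ²(Q1‖Q0)·(1−√γ_n) ≤ D(Q_{γ_n}‖Q0) ≤ (γ_n²/2)·χ²(Q1‖Q0)·(1+√γ_n). -/

import Mathlib

open Finset

/-!
Write `Q_γ = Q0 (1 + γ r)` with `r = (Q1 - Q0) / Q0`, so that `D(Q_γ‖Q0) = ∑ Q0 φ(γ r)` with
`φ(x) = (1 + x) log (1 + x)`. Since `∑ Q0 r = 0` and `∑ Q0 r² = χ²(Q1‖Q0)`, the error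
`D(Q_γ‖Q0) - γ² χ² / 2` equals `∑ Q0 R(γ r)` for the Taylor remainder `R(x) = φ(x) - x - x² / 2`,
and a monotonicity argument gives `|R(x)| ≤ |x|³` for `x ≥ -1/2`. The ratio `r` is bounded by some
`M`, so once `√γ M ≤ 1/2` we have `|γ r| ≤ √γ / 2` and the error is at most `(√γ / 2) γ² χ²`.
-/

/-- Kullback–Leibler divergence between two distributions on a finite alphabet. -/
noncomputable def klDiv {Z : Type*} [Fintype Z] (p q : Z → ℝ) : ℝ :=
  ∑ z, p z * Real.log (p z / q z)

/-- Chi-squared distance `χ²(Q1‖Q0)`. -/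
noncomputable def chiSq {Z : Type*} [Fintype Z] (q1 q0 : Z → ℝ) : ℝ :=
  ∑ z, (q1 z - q0 z) ^ 2 / q0 z

noncomputable def klTaylorRemainder (x : ℝ) : ℝ :=
  (1 + x) * Real.log (1 + x) - x - x ^ 2 / 2

lemma hasDerivAt_klTaylorRemainder {x : ℝ} (hx : 0 < 1 + x) :
    HasDerivAt klTaylorRemainder (Real.log (1 + x) - x) x := by
  have hlin : HasDerivAt (fun t : ℝ => 1 + t) 1 x := (hasDerivAt_id x).const_add 1
  have hlog := (Real.hasDerivAt_log hx.ne').comp x hlin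
  have := ((hlin.mul hlog).sub (hasDerivAt_id x)).sub ((hasDerivAt_pow 2 x).div_const 2)
  refine this.congr_deriv ?_
  simp only [Function.comp_apply]
  field_simp
  ring

lemma klTaylorRemainder_add_cube_monotoneOn :
    MonotoneOn (fun x => klTaylorRemainder x + x ^ 3) (Set.Ici (-1 / 2)) := by
  have hderiv (x : ℝ) (hx : x ∈ Set.Ici (-1 / 2 : ℝ)) : HasDerivAt
      (fun x => klTaylorRemainder x + x ^ 3) (Real.log (1 + x) - x + 3 * x ^ 2) x :=
    (hasDerivAt_klTaylorRemainder (by linarith [Set.mem_Ici.mp hx])).add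
      ((hasDerivAt_pow 3 x).congr_deriv (by norm_num))
  refine monotoneOn_of_hasDerivWithinAt_nonneg (convex_Ici _)
    (fun x hx => (hderiv x hx).continuousAt.continuousWithinAt)
    (fun x hx => (hderiv x (interior_subset hx)).hasDerivWithinAt) fun x hx => ?_
  rw [interior_Ici, Set.mem_Ioi] at hx
  have hpos : 0 < 1 + x := by linarith
  -- `log (1 + x) ≥ 1 - 1 / (1 + x)`, and `1 - 1 / (1 + x) - x = -x² / (1 + x) ≥ -2x²`
  have hlog := Real.one_sub_inv_le_log_of_pos hpos
  have hinv : (1 + x)⁻¹ ≤ 2 := by rw [inv_le_comm₀ hpos two_pos]; linarith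
  have : 1 - (1 + x)⁻¹ - x = -x ^ 2 * (1 + x)⁻¹ := by field_simp; ring
  nlinarith [mul_le_mul_of_nonneg_left hinv (sq_nonneg x)]

lemma klTaylorRemainder_antitoneOn : AntitoneOn klTaylorRemainder (Set.Ioi (-1)) := by
  have hderiv (x : ℝ) (hx : x ∈ Set.Ioi (-1 : ℝ)) :
      HasDerivAt klTaylorRemainder (Real.log (1 + x) - x) x :=
    hasDerivAt_klTaylorRemainder (by linarith [Set.mem_Ioi.mp hx])
  refine antitoneOn_of_hasDerivWithinAt_nonpos (convex_Ioi _)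
    (fun x hx => (hderiv x hx).continuousAt.continuousWithinAt)
    (fun x hx => (hderiv x (interior_subset hx)).hasDerivWithinAt) fun x hx => ?_
  rw [interior_Ioi, Set.mem_Ioi] at hx
  linarith [Real.log_le_sub_one_of_pos (show 0 < 1 + x by linarith)]

lemma abs_klTaylorRemainder_le {x : ℝ} (hx : -1 / 2 ≤ x) : |klTaylorRemainder x| ≤ |x| ^ 3 := by
  have h0 : klTaylorRemainder 0 = 0 := by simp [klTaylorRemainder]
  have hmem : x ∈ Set.Ici (-1 / 2 : ℝ) := hx
  have hmem' : x ∈ Set.Ioi (-1 : ℝ) := by simp only [Set.mem_Ioi]; linarith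
  have hzero : (0 : ℝ) ∈ Set.Ici (-1 / 2 : ℝ) := by norm_num
  have hzero' : (0 : ℝ) ∈ Set.Ioi (-1 : ℝ) := by norm_num
  rcases le_total 0 x with hx0 | hx0
  · have hup := klTaylorRemainder_antitoneOn hzero' hmem' hx0
    have hlow := klTaylorRemainder_add_cube_monotoneOn hzero hmem hx0
    simp only [h0] at hup hlow
    rw [abs_of_nonneg hx0, abs_le]
    constructor <;> nlinarith
  · have hlow := klTaylorRemainder_antitoneOn hmem' hzero' hx0
    have hup := klTaylorRemainder_add_cube_monotoneOn hmem hzero hx0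
    simp only [h0] at hup hlow
    rw [abs_of_nonpos hx0, abs_le]
    constructor <;> nlinarith

section Mixture

variable {Z : Type*} [Fintype Z]

lemma klDiv_mul_one_add {q : Z → ℝ} (hq : ∀ z, q z ≠ 0) (x : Z → ℝ) :
    klDiv (fun z => q z * (1 + x z)) q = ∑ z, q z * ((1 + x z) * Real.log (1 + x z)) := by
  refine sum_congr rfl fun z _ => ?_
  rw [mul_div_cancel_left₀ _ (hq z), mul_assoc]

lemma chiSq_eq_sum_mul_sq {q0 : Z → ℝ} (hq : ∀ z, q0 z ≠ 0) (q1 : Z → ℝ) :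
    chiSq q1 q0 = ∑ z, q0 z * ((q1 z - q0 z) / q0 z) ^ 2 := by
  refine sum_congr rfl fun z _ => ?_
  field_simp [hq z]

lemma klDiv_mixture_sub_eq {Q0 Q1 : Z → ℝ} (hQ0 : ∀ z, Q0 z ≠ 0)
    (hsum : ∑ z, Q1 z = ∑ z, Q0 z) (γ : ℝ) :
    klDiv (fun z => (1 - γ) * Q0 z + γ * Q1 z) Q0 - γ ^ 2 / 2 * chiSq Q1 Q0 =
      ∑ z, Q0 z * klTaylorRemainder (γ * ((Q1 z - Q0 z) / Q0 z)) := by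
  set r : Z → ℝ := fun z => (Q1 z - Q0 z) / Q0 z
  have hr (z : Z) : Q0 z * r z = Q1 z - Q0 z := mul_div_cancel₀ _ (hQ0 z)
  have hmix : (fun z => (1 - γ) * Q0 z + γ * Q1 z) = fun z => Q0 z * (1 + γ * r z) := by
    funext z
    linear_combination (-γ) * hr z
  have hmean : ∑ z, Q0 z * (γ * r z) = 0 := by
    have (z : Z) : Q0 z * (γ * r z) = γ * (Q1 z - Q0 z) := by linear_combination γ * hr z
    simp only [this, ← mul_sum, sum_sub_distrib, hsum, sub_self, mul_zero]
  have hvar : ∑ z, Q0 z * ((γ * r z) ^ 2 / 2) = γ ^ 2 / 2 * chiSq Q1 Q0 := by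
    rw [chiSq_eq_sum_mul_sq hQ0, mul_sum]
    exact sum_congr rfl fun z _ => by ring
  rw [hmix, klDiv_mul_one_add hQ0, ← hvar]
  simp only [klTaylorRemainder, mul_sub, sum_sub_distrib]
  rw [show ∑ z, Q0 z * (γ * ((Q1 z - Q0 z) / Q0 z)) = 0 from hmean, sub_zero]

lemma abs_sum_mul_klTaylorRemainder_le {q x : Z → ℝ} {δ : ℝ} (hq : ∀ z, 0 ≤ q z)
    (hδ : δ ≤ 1 / 2) (hx : ∀ z, |x z| ≤ δ) :
    |∑ z, q z * klTaylorRemainder (x z)| ≤ δ * ∑ z, q z * x z ^ 2 := by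
  rw [mul_sum]
  refine (abs_sum_le_sum_abs _ _).trans (sum_le_sum fun z _ => ?_)
  have hxz := abs_le.mp ((hx z).trans hδ)
  calc |q z * klTaylorRemainder (x z)| = q z * |klTaylorRemainder (x z)| := by
        rw [abs_mul, abs_of_nonneg (hq z)]
    _ ≤ q z * (|x z| * x z ^ 2) := by
        rw [← sq_abs, ← pow_succ']
        exact mul_le_mul_of_nonneg_left (abs_klTaylorRemainder_le (by linarith)) (hq z)
    _ ≤ q z * (δ * x z ^ 2) :=
        mul_le_mul_of_nonneg_left (mul_le_mul_of_nonneg_right (hx z) (sq_nonneg _)) (hq z)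
    _ = δ * (q z * x z ^ 2) := by ring

lemma abs_klDiv_mixture_sub_le {Q0 Q1 : Z → ℝ} (hQ0 : ∀ z, 0 < Q0 z)
    (hsum : ∑ z, Q1 z = ∑ z, Q0 z) {M γ : ℝ} (hM : ∀ z, |(Q1 z - Q0 z) / Q0 z| ≤ M)
    (hγ : γ ∈ Set.Icc (0 : ℝ) 1) (hγM : √γ * M ≤ 1 / 2) :
    |klDiv (fun z => (1 - γ) * Q0 z + γ * Q1 z) Q0 - γ ^ 2 / 2 * chiSq Q1 Q0| ≤
      γ ^ 2 / 2 * chiSq Q1 Q0 * √γ := by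
  have hQ0ne (z : Z) : Q0 z ≠ 0 := (hQ0 z).ne'
  have hsqrt_le_one : √γ ≤ 1 := Real.sqrt_le_one.mpr hγ.2
  have hsmall (z : Z) : |γ * ((Q1 z - Q0 z) / Q0 z)| ≤ √γ / 2 := by
    calc |γ * ((Q1 z - Q0 z) / Q0 z)| = √γ * (√γ * |(Q1 z - Q0 z) / Q0 z|) := by
          rw [abs_mul, abs_of_nonneg hγ.1, ← mul_assoc, Real.mul_self_sqrt hγ.1]
      _ ≤ √γ * (1 / 2) := by
          gcongr
          exact (mul_le_mul_of_nonneg_left (hM z) (Real.sqrt_nonneg γ)).trans hγM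
      _ = √γ / 2 := by ring
  rw [klDiv_mixture_sub_eq hQ0ne hsum]
  refine (abs_sum_mul_klTaylorRemainder_le (fun z => (hQ0 z).le) (by linarith) hsmall).trans_eq ?_
  rw [chiSq_eq_sum_mul_sq hQ0ne, mul_sum, mul_sum, sum_mul]
  exact sum_congr rfl fun z _ => by ring

end Mixture

theorem stmt2 {Z : Type*} [Fintype Z] (Q0 Q1 : Z → ℝ)
    (hQ0pos : ∀ z, 0 < Q0 z) (hQ0sum : ∑ z, Q0 z = 1)
    (hQ1sum : ∑ z, Q1 z = 1)
    (γ : ℕ → ℝ) (hγmem : ∀ n, γ n ∈ Set.Icc (0 : ℝ) 1)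
    (hγ0 : Filter.Tendsto γ Filter.atTop (nhds 0)) :
    ∀ᶠ n in Filter.atTop,
      (γ n) ^ 2 / 2 * chiSq Q1 Q0 * (1 - Real.sqrt (γ n)) ≤
        klDiv (fun z => (1 - γ n) * Q0 z + γ n * Q1 z) Q0 ∧
      klDiv (fun z => (1 - γ n) * Q0 z + γ n * Q1 z) Q0 ≤
        (γ n) ^ 2 / 2 * chiSq Q1 Q0 * (1 + Real.sqrt (γ n)) := by
  obtain ⟨M, hM⟩ := (Set.finite_range fun z => |(Q1 z - Q0 z) / Q0 z|).bddAbove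
  have hsqrtM : Filter.Tendsto (fun n => √(γ n) * M) Filter.atTop (nhds 0) := by
    simpa using (hγ0.sqrt.mul_const M)
  filter_upwards [hsqrtM.eventually_le_const one_half_pos] with n hn
  have hbound := abs_le.mp <| abs_klDiv_mixture_sub_le hQ0pos (by rw [hQ0sum, hQ1sum])
    (fun z => hM ⟨z, rfl⟩) (hγmem n) hn
  rw [mul_one_sub, mul_one_add]
  constructor <;> linarith [hbound.1, hbound.2]
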